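/- Trace-difference formula under removing one column: Let X be an M × N complex matrix with first column x_1, let X^{(1)} be the matrix obtained by removing the first column, and for z with Im z > 0 set G(z) = (X†X − z)^{−1}, G^{(1)}(z) = ((X^{(1)})†X^{(1)} − z)^{−1}, and 𝒢^{(1)}(z) = (X^{(1)}(X^{(1)})† − z)^{−1}. Then tr G(z) − tr G^{(1)}(z) + z^{−1} = (G_{11}(z) + z^{−1}) + (x_1, X^{(1)} G^{(1)}(z) G^{(1)}(z) (X^{(1)})† x_1) / ( −z − z (x_1, 𝒢^{(1)}(z) x_1) ) = z G_{11}(z) · (x_1, (𝒢^{(1)}(z))² x_1). -/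

import Mathlib

/-! Removing the first column changes `X X†` by the rank-one term `x₁ x₁†`, so the
Sherman–Morrison formula expresses `(X X† − z)⁻¹ x₁` and `tr (X X† − z)⁻¹` through
`q = (x₁, 𝒢⁽¹⁾ x₁)` and `s = (x₁, (𝒢⁽¹⁾)² x₁)`. The push-through identity
`W (W†W − z)⁻¹ = (W W† − z)⁻¹ W` turns `G`, its trace and `X⁽¹⁾ (G⁽¹⁾)² (X⁽¹⁾)†` into the
same quantities: `G₁₁ = −1 / (z (1 + q))` and both sides equal `−s / (1 + q)`.
All resolvents exist because Hermitian matrices have real spectrum and `Im z ≠ 0`. -/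

open Matrix

noncomputable section

/-- Removing the first column of a matrix with `N+1` columns. -/
def dropFirst {M N : ℕ} (Q : Matrix (Fin M) (Fin (N + 1)) ℂ) : Matrix (Fin M) (Fin N) ℂ :=
  Matrix.of fun i j => Q i j.succ

/-- The quadratic form `(v, A v) = v† A v`. -/
def qForm {M : ℕ} (v : Fin M → ℂ) (A : Matrix (Fin M) (Fin M) ℂ) : ℂ :=
  dotProduct (star v) (A.mulVec v)

namespace Matrix

section RankOne

variable {K : Type*} [Field K] {m : Type*} [Fintype m] [DecidableEq m]
  {C : Matrix m m K} (u v : m → K)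

theorem inv_sub_inv_add_vecMulVec (hC : IsUnit C.det) (hD : IsUnit (C + vecMulVec u v).det) :
    C⁻¹ - (C + vecMulVec u v)⁻¹ = (C + vecMulVec u v)⁻¹ * vecMulVec u v * C⁻¹ := by
  rw [← neg_sub, inv_sub_inv (by simp only [isUnit_iff_isUnit_det, hC, hD])]
  simp

theorem one_add_dotProduct_smul_inv_add_vecMulVec_mulVec (hC : IsUnit C.det)
    (hD : IsUnit (C + vecMulVec u v).det) :
    (1 + v ⬝ᵥ C⁻¹ *ᵥ u) • ((C + vecMulVec u v)⁻¹ *ᵥ u) = C⁻¹ *ᵥ u := by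
  have h := congrArg (· *ᵥ u) (inv_sub_inv_add_vecMulVec u v hC hD)
  simp only [sub_mulVec, ← mulVec_mulVec, vecMulVec_mulVec, op_smul_eq_smul, mulVec_smul] at h
  rw [add_smul, one_smul, ← h]
  abel

theorem one_add_dotProduct_inv_mulVec_ne_zero (hC : IsUnit C.det)
    (hD : IsUnit (C + vecMulVec u v).det) : 1 + v ⬝ᵥ C⁻¹ *ᵥ u ≠ 0 := by
  intro h
  have hCu : C⁻¹ *ᵥ u = 0 := by
    rw [← one_add_dotProduct_smul_inv_add_vecMulVec_mulVec u v hC hD, h, zero_smul]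
  simp [hCu] at h

theorem dotProduct_inv_add_vecMulVec_mulVec (hC : IsUnit C.det)
    (hD : IsUnit (C + vecMulVec u v).det) (w : m → K) :
    w ⬝ᵥ (C + vecMulVec u v)⁻¹ *ᵥ u = (w ⬝ᵥ C⁻¹ *ᵥ u) / (1 + v ⬝ᵥ C⁻¹ *ᵥ u) := by
  rw [eq_div_iff (one_add_dotProduct_inv_mulVec_ne_zero u v hC hD), mul_comm, ← smul_eq_mul,
    ← dotProduct_smul, one_add_dotProduct_smul_inv_add_vecMulVec_mulVec u v hC hD]

theorem trace_inv_sub_trace_inv_add_vecMulVec (hC : IsUnit C.det)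
    (hD : IsUnit (C + vecMulVec u v).det) :
    C⁻¹.trace - (C + vecMulVec u v)⁻¹.trace =
      (v ⬝ᵥ C⁻¹ *ᵥ C⁻¹ *ᵥ u) / (1 + v ⬝ᵥ C⁻¹ *ᵥ u) := by
  rw [← trace_sub, inv_sub_inv_add_vecMulVec u v hC hD, mul_vecMulVec, vecMulVec_mul,
    trace_vecMulVec, dotProduct_comm, dotProduct_inv_add_vecMulVec_mulVec u v hC hD,
    ← dotProduct_mulVec]

end RankOne

section Resolvent

variable {𝕜 : Type*} [RCLike 𝕜] {m n : Type*} [Fintype m] [Fintype n] [DecidableEq m]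
  [DecidableEq n] {z : 𝕜}

theorem IsHermitian.isUnit_det_sub_smul_one {A : Matrix n n 𝕜} (hA : A.IsHermitian)
    (hz : RCLike.im z ≠ 0) : IsUnit (A - z • 1).det := by
  have hzA : z ∉ spectrum 𝕜 A := by
    rw [hA.spectrum_eq_image_range]
    rintro ⟨r, -, rfl⟩
    exact hz (RCLike.ofReal_im r)
  rw [spectrum.mem_iff, not_not, Algebra.algebraMap_eq_smul_one, ← neg_sub, IsUnit.neg_iff,
    isUnit_iff_isUnit_det] at hzA
  exact hzA

variable (W : Matrix m n 𝕜)

theorem mul_inv_conjTranspose_mul_self_sub (hz : RCLike.im z ≠ 0) :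
    W * (Wᴴ * W - z • 1)⁻¹ = (W * Wᴴ - z • 1)⁻¹ * W := by
  have hB := (isHermitian_conjTranspose_mul_self W).isUnit_det_sub_smul_one hz
  have hC := (isHermitian_mul_conjTranspose_self W).isUnit_det_sub_smul_one hz
  have hWB : W * (Wᴴ * W - z • 1) = (W * Wᴴ - z • 1) * W := by
    simp only [Matrix.mul_sub, Matrix.sub_mul, Matrix.mul_smul, Matrix.smul_mul, Matrix.mul_one,
      Matrix.one_mul, Matrix.mul_assoc]
  calc W * (Wᴴ * W - z • 1)⁻¹
      = (W * Wᴴ - z • 1)⁻¹ * ((W * Wᴴ - z • 1) * W) * (Wᴴ * W - z • 1)⁻¹ := by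
        rw [nonsing_inv_mul_cancel_left _ _ hC]
    _ = (W * Wᴴ - z • 1)⁻¹ * W := by
        rw [← hWB, ← Matrix.mul_assoc, mul_nonsing_inv_cancel_right _ _ hB]

theorem inv_conjTranspose_mul_self_sub (hz : RCLike.im z ≠ 0) :
    (Wᴴ * W - z • 1)⁻¹ = z⁻¹ • (Wᴴ * (W * Wᴴ - z • 1)⁻¹ * W - 1) := by
  have hz0 : z ≠ 0 := by rintro rfl; simp at hz
  have hB := (isHermitian_conjTranspose_mul_self W).isUnit_det_sub_smul_one hz
  have h : Wᴴ * (W * Wᴴ - z • 1)⁻¹ * W = 1 + z • (Wᴴ * W - z • 1)⁻¹ := by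
    rw [Matrix.mul_assoc, ← mul_inv_conjTranspose_mul_self_sub W hz, ← Matrix.mul_assoc]
    set B := Wᴴ * W - z • 1
    rw [show Wᴴ * W = B + z • 1 from (sub_add_cancel _ _).symm, Matrix.add_mul,
      mul_nonsing_inv _ hB, smul_mul, Matrix.one_mul]
  rw [h, add_sub_cancel_left, smul_smul, inv_mul_cancel₀ hz0, one_smul]

theorem trace_inv_conjTranspose_mul_self_sub (hz : RCLike.im z ≠ 0) :
    (Wᴴ * W - z • 1)⁻¹.trace =
      (W * Wᴴ - z • 1)⁻¹.trace + z⁻¹ * (Fintype.card m - Fintype.card n) := by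
  have hz0 : z ≠ 0 := by rintro rfl; simp at hz
  have hC := (isHermitian_mul_conjTranspose_self W).isUnit_det_sub_smul_one hz
  have h : (Wᴴ * (W * Wᴴ - z • 1)⁻¹ * W).trace =
      Fintype.card m + z * (W * Wᴴ - z • 1)⁻¹.trace := by
    rw [Matrix.mul_assoc, trace_mul_comm, Matrix.mul_assoc]
    set C := W * Wᴴ - z • 1
    rw [show W * Wᴴ = C + z • 1 from (sub_add_cancel _ _).symm, Matrix.mul_add,
      nonsing_inv_mul _ hC, Matrix.mul_smul, Matrix.mul_one, trace_add, trace_one, trace_smul,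
      smul_eq_mul]
  rw [inv_conjTranspose_mul_self_sub W hz, trace_smul, trace_sub, trace_one, h, smul_eq_mul]
  field_simp
  ring

theorem mul_inv_mul_inv_mul_conjTranspose (hz : RCLike.im z ≠ 0) :
    W * (Wᴴ * W - z • 1)⁻¹ * (Wᴴ * W - z • 1)⁻¹ * Wᴴ =
      (W * Wᴴ - z • 1)⁻¹ + z • ((W * Wᴴ - z • 1)⁻¹ * (W * Wᴴ - z • 1)⁻¹) := by
  have hC := (isHermitian_mul_conjTranspose_self W).isUnit_det_sub_smul_one hz
  rw [mul_inv_conjTranspose_mul_self_sub W hz, Matrix.mul_assoc _ W,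
    mul_inv_conjTranspose_mul_self_sub W hz, Matrix.mul_assoc, Matrix.mul_assoc]
  set C := W * Wᴴ - z • 1
  rw [show W * Wᴴ = C + z • 1 from (sub_add_cancel _ _).symm, Matrix.mul_add,
    nonsing_inv_mul _ hC, Matrix.mul_add, Matrix.mul_one, Matrix.mul_smul, Matrix.mul_one,
    Matrix.mul_smul]

end Resolvent

theorem conjTranspose_mul_mul_apply_self {α : Type*} [NonUnitalSemiring α] [Star α]
    {m n : Type*} [Fintype m] (X : Matrix m n α) (E : Matrix m m α) (j : n) :
    (Xᴴ * E * X) j j = star (fun i => X i j) ⬝ᵥ E *ᵥ fun i => X i j := by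
  rw [Matrix.mul_assoc]
  simp only [mul_apply, conjTranspose_apply, dotProduct, mulVec, Pi.star_apply]

end Matrix

theorem mul_conjTranspose_eq_dropFirst_add {M N : ℕ} (X : Matrix (Fin M) (Fin (N + 1)) ℂ) :
    X * Xᴴ = dropFirst X * (dropFirst X)ᴴ + vecMulVec (fun i => X i 0) (star fun i => X i 0) := by
  ext i j
  simp only [mul_apply, conjTranspose_apply, Fin.sum_univ_succ, dropFirst, of_apply,
    Matrix.add_apply, vecMulVec_apply, Pi.star_apply]
  ring

/-- **Trace-difference formula under removing one column** (equation (4.9)):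
`tr G − tr G⁽¹⁾ + z⁻¹
  = (G₁₁ + z⁻¹) + (x₁, X⁽¹⁾G⁽¹⁾G⁽¹⁾(X⁽¹⁾)† x₁)/(−z − z (x₁, 𝒢⁽¹⁾ x₁))
  = z G₁₁ (x₁, (𝒢⁽¹⁾)² x₁)`. -/
theorem trace_difference_one_column
    (M N : ℕ) (X : Matrix (Fin M) (Fin (N + 1)) ℂ) (z : ℂ) (hz : 0 < z.im) :
    ((Xᴴ * X - z • 1)⁻¹).trace - (((dropFirst X)ᴴ * dropFirst X - z • 1)⁻¹).trace + z⁻¹ =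
      (((Xᴴ * X - z • 1)⁻¹ : Matrix (Fin (N + 1)) (Fin (N + 1)) ℂ) 0 0 + z⁻¹) +
        qForm (fun i => X i 0)
          (dropFirst X * ((dropFirst X)ᴴ * dropFirst X - z • 1)⁻¹ *
            ((dropFirst X)ᴴ * dropFirst X - z • 1)⁻¹ * (dropFirst X)ᴴ) /
          (-z - z * qForm (fun i => X i 0)
            ((dropFirst X * (dropFirst X)ᴴ - z • 1)⁻¹)) ∧
    ((Xᴴ * X - z • 1)⁻¹).trace - (((dropFirst X)ᴴ * dropFirst X - z • 1)⁻¹).trace + z⁻¹ =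
      z * ((Xᴴ * X - z • 1)⁻¹ : Matrix (Fin (N + 1)) (Fin (N + 1)) ℂ) 0 0 *
        qForm (fun i => X i 0)
          ((dropFirst X * (dropFirst X)ᴴ - z • 1)⁻¹ *
            (dropFirst X * (dropFirst X)ᴴ - z • 1)⁻¹) := by
  have hz_im : RCLike.im z ≠ 0 := hz.ne'
  have hz0 : z ≠ 0 := by rintro rfl; simp at hz
  set Y := dropFirst X
  set x : Fin M → ℂ := fun i => X i 0
  set C := Y * Yᴴ - z • 1 with hC_def
  have hC : IsUnit C.det := (isHermitian_mul_conjTranspose_self Y).isUnit_det_sub_smul_one hz_im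
  have hsplit : X * Xᴴ - z • 1 = C + vecMulVec x (star x) := by
    rw [mul_conjTranspose_eq_dropFirst_add, add_sub_right_comm]
  have hD : IsUnit (C + vecMulVec x (star x)).det :=
    hsplit ▸ (isHermitian_mul_conjTranspose_self X).isUnit_det_sub_smul_one hz_im
  set q := star x ⬝ᵥ C⁻¹ *ᵥ x
  set s := star x ⬝ᵥ C⁻¹ *ᵥ C⁻¹ *ᵥ x
  have hq : 1 + q ≠ 0 := one_add_dotProduct_inv_mulVec_ne_zero x (star x) hC hD
  have hG : ((Xᴴ * X - z • 1)⁻¹ : Matrix (Fin (N + 1)) (Fin (N + 1)) ℂ) 0 0 =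
      z⁻¹ * (q / (1 + q) - 1) := by
    rw [inv_conjTranspose_mul_self_sub X hz_im, Matrix.smul_apply, Matrix.sub_apply,
      conjTranspose_mul_mul_apply_self, hsplit,
      dotProduct_inv_add_vecMulVec_mulVec x (star x) hC hD, one_apply_eq, smul_eq_mul]
  have htr : ((Xᴴ * X - z • 1)⁻¹).trace - ((Yᴴ * Y - z • 1)⁻¹).trace + z⁻¹ =
      -(s / (1 + q)) := by
    rw [trace_inv_conjTranspose_mul_self_sub X hz_im,
      trace_inv_conjTranspose_mul_self_sub Y hz_im, hsplit, ← hC_def]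
    have hdiff := trace_inv_sub_trace_inv_add_vecMulVec x (star x) hC hD
    simp only [Fintype.card_fin, Nat.cast_add, Nat.cast_one]
    linear_combination -hdiff
  have hq₁ : qForm x C⁻¹ = q := rfl
  have hq₂ : qForm x (C⁻¹ * C⁻¹) = s := by rw [qForm, ← mulVec_mulVec]
  have hq₃ : qForm x (Y * (Yᴴ * Y - z • 1)⁻¹ * (Yᴴ * Y - z • 1)⁻¹ * Yᴴ) = q + z * s := by
    rw [mul_inv_mul_inv_mul_conjTranspose Y hz_im, qForm, add_mulVec, smul_mulVec,
      dotProduct_add, dotProduct_smul, ← mulVec_mulVec, smul_eq_mul]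
  refine ⟨?_, ?_⟩
  · rw [htr, hG, hq₃, hq₁, show -z - z * q = -(z * (1 + q)) by ring]
    field_simp
    ring
  · rw [htr, hG, hq₂]
    field_simp
    ring

end
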